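/- Let K be a field, n ≥ 2 and 1 ≤ d ≤ n−1. The ideal of K[a_{11}, …, a_{nn}] generated by the d×d minors of the small Kalman matrix of the generic n×n matrix A equals the ideal I_{d,n} generated by the d×d minors of the reduced Kalman matrix of A; that is, substituting A12 = 0 and A22 = 0 in the small Kalman matrix does not change the ideal generated by its maximal minors. -/

import Mathlib

/-!
Write `A` in block form and `[M]` for the lower-left block of `M`. Left multiplication by `A`
gives `[A^(k+1)] = A21 (A^k)11 + A22 [A^k]` and `(A^(k+1))11 = A11 (A^k)11 + A12 [A^k]`, so by
induction the rows of `(A^(k+1))11 - A11^(k+1)` and of `[A^(k+1)] - A21 A11^k` are linear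
combinations of the rows of `[A], …, [A^k]`. Hence the small and the reduced Kalman matrices have
the same row span. The ideal of maximal minors depends only on the row span: if `N = C M`, every
maximal minor of `N` is a combination of maximal minors of `M`, by multilinearity of `det` in
the rows.
-/

open Matrix MvPolynomial

/-- The small Kalman matrix of `A`: the `d(n-d) × d` matrix obtained by vertically stacking the
blocks `[A^i]` for `i = 1, …, d`, where `[M]` is the submatrix of `M` formed by the last `n - d`
rows and the first `d` columns. -/
noncomputable def smallKalman {R : Type*} [CommRing R] {n d : ℕ} (hdn : d ≤ n)
    (A : Matrix (Fin n) (Fin n) R) : Matrix (Fin d × Fin (n - d)) (Fin d) R :=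
  fun p j =>
    (A ^ ((p.1 : ℕ) + 1)) ⟨d + (p.2 : ℕ), by have := p.2.isLt; omega⟩
      ⟨(j : ℕ), by have := j.isLt; omega⟩

/-- The reduced Kalman matrix built from a `d × d` block `A11` and an `m × d` block `A21`: the
vertical stacking of the blocks `A21 * A11 ^ i` for `i = 0, 1, …, d - 1`. -/
noncomputable def reducedKalman {R : Type*} [CommRing R] {d m : ℕ}
    (A11 : Matrix (Fin d) (Fin d) R) (A21 : Matrix (Fin m) (Fin d) R) :
    Matrix (Fin d × Fin m) (Fin d) R :=
  fun p j => (A21 * A11 ^ (p.1 : ℕ)) p.2 j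

/-- The upper-left `d × d` block of an `n × n` matrix. -/
def blockUL {R : Type*} {n d : ℕ} (hdn : d ≤ n) (A : Matrix (Fin n) (Fin n) R) :
    Matrix (Fin d) (Fin d) R :=
  fun i j => A ⟨(i : ℕ), by have := i.isLt; omega⟩ ⟨(j : ℕ), by have := j.isLt; omega⟩

/-- The lower-left `(n-d) × d` block of an `n × n` matrix. -/
def blockLL {R : Type*} {n d : ℕ} (hdn : d ≤ n) (A : Matrix (Fin n) (Fin n) R) :
    Matrix (Fin (n - d)) (Fin d) R :=
  fun i j => A ⟨d + (i : ℕ), by have := i.isLt; omega⟩ ⟨(j : ℕ), by have := j.isLt; omega⟩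

/-- The generic `n × n` matrix whose entries are the variables of `K[a_{11}, …, a_{nn}]`. -/
noncomputable def genMatrix (K : Type*) [CommSemiring K] (n : ℕ) :
    Matrix (Fin n) (Fin n) (MvPolynomial (Fin n × Fin n) K) :=
  fun i j => X (i, j)

open Submodule

section MaximalMinors

variable {R ι κ n : Type*} [CommRing R] [Fintype n] [DecidableEq n]

/-- Indexing minors by all maps `r`, not only increasing ones, adds only zero minors and sign
changes, so this is the ideal of maximal minors. -/
def maxMinorsIdeal (M : Matrix ι n R) : Ideal R :=
  Ideal.span (Set.range fun r : n → ι => (M.submatrix r id).det)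

lemma maxMinorsIdeal_mul_le [Fintype κ] (C : Matrix ι κ R) (M : Matrix κ n R) :
    maxMinorsIdeal (C * M) ≤ maxMinorsIdeal M := by
  refine Ideal.span_le.2 ?_
  rintro _ ⟨r, rfl⟩
  have hrows : (C * M).submatrix r id = fun i => ∑ k, C (r i) k • M k := by
    funext i
    exact (mul_apply_eq_vecMul C M (r i)).trans (vecMul_eq_sum _ _)
  change detRowAlternating.toMultilinearMap ((C * M).submatrix r id) ∈ _
  rw [hrows, MultilinearMap.map_sum]
  refine Ideal.sum_mem _ fun c _ => ?_
  rw [MultilinearMap.map_smul_univ, smul_eq_mul]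
  exact Ideal.mul_mem_left _ _ (Ideal.subset_span ⟨c, rfl⟩)

lemma maxMinorsIdeal_le_of_span_le [Fintype κ] {N : Matrix ι n R} {M : Matrix κ n R}
    (h : span R (Set.range N) ≤ span R (Set.range M)) :
    maxMinorsIdeal N ≤ maxMinorsIdeal M := by
  choose C hC using fun i =>
    (mem_span_range_iff_exists_fun R).1 (h (subset_span ⟨i, rfl⟩))
  have hN : Matrix.of C * M = N := by
    funext i
    rw [mul_apply_eq_vecMul, vecMul_eq_sum]
    exact hC i
  exact hN ▸ maxMinorsIdeal_mul_le C M

lemma maxMinorsIdeal_eq_of_span_eq [Fintype ι] [Fintype κ] {N : Matrix ι n R}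
    {M : Matrix κ n R} (h : span R (Set.range N) = span R (Set.range M)) :
    maxMinorsIdeal N = maxMinorsIdeal M :=
  le_antisymm (maxMinorsIdeal_le_of_span_le h.le) (maxMinorsIdeal_le_of_span_le h.ge)

end MaximalMinors

lemma Submodule.sup_span_range_eq_of_sub_mem {R M ι : Type*} [Ring R] [AddCommGroup M]
    [Module R M] {U : Submodule R M} {f g : ι → M} (h : ∀ i, f i - g i ∈ U) :
    U ⊔ span R (Set.range f) = U ⊔ span R (Set.range g) := by
  have key : ∀ {f g : ι → M}, (∀ i, f i - g i ∈ U) →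
      U ⊔ span R (Set.range f) ≤ U ⊔ span R (Set.range g) := by
    intro f g h
    refine sup_le le_sup_left (span_le.2 ?_)
    rintro _ ⟨i, rfl⟩
    rw [← sub_add_cancel (f i) (g i)]
    exact add_mem (mem_sup_left (h i)) (mem_sup_right (subset_span ⟨i, rfl⟩))
  exact le_antisymm (key h) (key fun i => sub_mem_comm_iff.1 (h i))

lemma span_range_uncurry_eq_iSup {R M ι : Type*} [Semiring R] [AddCommMonoid M] [Module R M]
    (F : ℕ → ι → M) (d : ℕ) :
    span R (Set.range fun x : Fin d × ι => F x.1 x.2) = ⨆ j < d, span R (Set.range (F j)) := by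
  refine le_antisymm (span_le.2 ?_) (iSup₂_le fun j hj => span_mono ?_)
  · rintro _ ⟨⟨j, i⟩, rfl⟩
    exact mem_iSup_of_mem (j : ℕ) (mem_iSup_of_mem j.isLt (subset_span ⟨i, rfl⟩))
  · rintro _ ⟨i, rfl⟩
    exact ⟨(⟨j, hj⟩, i), rfl⟩

namespace Matrix

section Rows

variable {R ι κ n : Type*} [CommRing R] [Fintype κ]

lemma mul_apply_mem_of_forall_mem {U : Submodule R (n → R)} {X : Matrix κ n R}
    (hX : ∀ k, X k ∈ U) (Y : Matrix ι κ R) (i : ι) : (Y * X) i ∈ U := by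
  rw [mul_apply_eq_vecMul, vecMul_eq_sum]
  exact sum_mem fun k _ => smul_mem _ _ (hX k)

lemma mul_apply_mem_span_range (X : Matrix κ n R) (Y : Matrix ι κ R) (i : ι) :
    (Y * X) i ∈ span R (Set.range X) :=
  mul_apply_mem_of_forall_mem (fun k => subset_span (Set.mem_range_self k)) Y i

end Rows

lemma submatrix_equiv_pow {R m n : Type*} [CommSemiring R] [Fintype m] [DecidableEq m]
    [Fintype n] [DecidableEq n] (A : Matrix m m R) (e : n ≃ m) (k : ℕ) :
    A.submatrix e e ^ k = (A ^ k).submatrix e e :=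
  (map_pow (reindexAlgEquiv R R e.symm) A k).symm

variable {R p q : Type*} [CommRing R] [Fintype p] [Fintype q]

lemma toBlocks₁₁_mul (B C : Matrix (p ⊕ q) (p ⊕ q) R) :
    (B * C).toBlocks₁₁ =
      B.toBlocks₁₁ * C.toBlocks₁₁ + B.toBlocks₁₂ * C.toBlocks₂₁ := by
  ext i j
  simp [toBlocks₁₁, toBlocks₁₂, toBlocks₂₁, mul_apply, Fintype.sum_sum_type]

lemma toBlocks₂₁_mul (B C : Matrix (p ⊕ q) (p ⊕ q) R) :
    (B * C).toBlocks₂₁ =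
      B.toBlocks₂₁ * C.toBlocks₁₁ + B.toBlocks₂₂ * C.toBlocks₂₁ := by
  ext i j
  simp [toBlocks₁₁, toBlocks₂₂, toBlocks₂₁, mul_apply, Fintype.sum_sum_type]

end Matrix

section KalmanRowSpan

variable {R p q : Type*} [CommRing R] [Fintype p] [DecidableEq p]

def reducedKalmanRowSpan (A₁₁ : Matrix p p R) (A₂₁ : Matrix q p R) (k : ℕ) :
    Submodule R (p → R) :=
  ⨆ j < k, span R (Set.range (A₂₁ * A₁₁ ^ j))

lemma reducedKalmanRowSpan_succ (A₁₁ : Matrix p p R) (A₂₁ : Matrix q p R) (k : ℕ) :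
    reducedKalmanRowSpan A₁₁ A₂₁ (k + 1) =
      reducedKalmanRowSpan A₁₁ A₂₁ k ⊔ span R (Set.range (A₂₁ * A₁₁ ^ k)) :=
  Nat.iSup_lt_succ _ k

variable [Fintype q] [DecidableEq q] (B : Matrix (p ⊕ q) (p ⊕ q) R)

def kalmanRowSpan (k : ℕ) : Submodule R (p → R) :=
  ⨆ j < k, span R (Set.range (B ^ (j + 1)).toBlocks₂₁)

lemma kalmanRowSpan_succ (k : ℕ) :
    kalmanRowSpan B (k + 1) =
      kalmanRowSpan B k ⊔ span R (Set.range (B ^ (k + 1)).toBlocks₂₁) :=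
  Nat.iSup_lt_succ _ k

lemma toBlocks₁₁_pow_succ_sub_mem (k : ℕ) (i : p) :
    ((B ^ (k + 1)).toBlocks₁₁ - B.toBlocks₁₁ ^ (k + 1)) i ∈ kalmanRowSpan B k := by
  induction k generalizing i with
  | zero =>
    simp only [zero_add, pow_one, sub_self]
    exact zero_mem _
  | succ k ih =>
    have hsplit : (B ^ (k + 2)).toBlocks₁₁ - B.toBlocks₁₁ ^ (k + 2) =
        B.toBlocks₁₁ * ((B ^ (k + 1)).toBlocks₁₁ - B.toBlocks₁₁ ^ (k + 1)) +
          B.toBlocks₁₂ * (B ^ (k + 1)).toBlocks₂₁ := by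
      rw [pow_succ' B, toBlocks₁₁_mul, pow_succ' B.toBlocks₁₁, Matrix.mul_sub]
      abel
    rw [hsplit, kalmanRowSpan_succ]
    exact add_mem (mem_sup_left (mul_apply_mem_of_forall_mem ih _ i))
      (mem_sup_right (mul_apply_mem_span_range _ _ i))

lemma toBlocks₂₁_pow_succ_sub_mem (k : ℕ) (i : q) :
    ((B ^ (k + 1)).toBlocks₂₁ - B.toBlocks₂₁ * B.toBlocks₁₁ ^ k) i ∈
      kalmanRowSpan B k := by
  cases k with
  | zero =>
    simp only [zero_add, pow_one, pow_zero, Matrix.mul_one, sub_self]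
    exact zero_mem _
  | succ k =>
    have hsplit : (B ^ (k + 2)).toBlocks₂₁ - B.toBlocks₂₁ * B.toBlocks₁₁ ^ (k + 1) =
        B.toBlocks₂₁ * ((B ^ (k + 1)).toBlocks₁₁ - B.toBlocks₁₁ ^ (k + 1)) +
          B.toBlocks₂₂ * (B ^ (k + 1)).toBlocks₂₁ := by
      rw [pow_succ' B, toBlocks₂₁_mul, Matrix.mul_sub]
      abel
    rw [hsplit, kalmanRowSpan_succ]
    exact add_mem
      (mem_sup_left (mul_apply_mem_of_forall_mem (toBlocks₁₁_pow_succ_sub_mem B k) _ i))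
      (mem_sup_right (mul_apply_mem_span_range _ _ i))

theorem kalmanRowSpan_eq_reducedKalmanRowSpan (k : ℕ) :
    kalmanRowSpan B k = reducedKalmanRowSpan B.toBlocks₁₁ B.toBlocks₂₁ k := by
  induction k with
  | zero => simp [kalmanRowSpan, reducedKalmanRowSpan]
  | succ k ih =>
    rw [kalmanRowSpan_succ, reducedKalmanRowSpan_succ, ← ih]
    exact sup_span_range_eq_of_sub_mem (toBlocks₂₁_pow_succ_sub_mem B k)

end KalmanRowSpan

theorem maxMinorsIdeal_kalman_toBlocks_eq {R : Type*} [CommRing R] {d m : ℕ}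
    (B : Matrix (Fin d ⊕ Fin m) (Fin d ⊕ Fin m) R) :
    maxMinorsIdeal (fun x : Fin d × Fin m => (B ^ ((x.1 : ℕ) + 1)).toBlocks₂₁ x.2) =
      maxMinorsIdeal (reducedKalman B.toBlocks₁₁ B.toBlocks₂₁) := by
  refine maxMinorsIdeal_eq_of_span_eq ?_
  unfold reducedKalman
  rw [span_range_uncurry_eq_iSup (fun j => (B ^ (j + 1)).toBlocks₂₁),
    span_range_uncurry_eq_iSup (fun j => B.toBlocks₂₁ * B.toBlocks₁₁ ^ j)]
  exact kalmanRowSpan_eq_reducedKalmanRowSpan B d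

/-- `blockUL hdn A` and `blockLL hdn A` are, by definition, the blocks `toBlocks₁₁` and
`toBlocks₂₁` of `A` reindexed along this equivalence. -/
def finSplitEquiv {n d : ℕ} (hdn : d ≤ n) : Fin d ⊕ Fin (n - d) ≃ Fin n :=
  finSumFinEquiv.trans (finCongr (Nat.add_sub_cancel' hdn))

lemma smallKalman_eq_toBlocks₂₁ {R : Type*} [CommRing R] {n d : ℕ} (hdn : d ≤ n)
    (A : Matrix (Fin n) (Fin n) R) :
    smallKalman hdn A = fun x : Fin d × Fin (n - d) =>
      (A.submatrix (finSplitEquiv hdn) (finSplitEquiv hdn) ^ ((x.1 : ℕ) + 1)).toBlocks₂₁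
        x.2 := by
  funext x
  rw [submatrix_equiv_pow]
  rfl

theorem maxMinorsIdeal_smallKalman_eq {R : Type*} [CommRing R] {n d : ℕ} (hdn : d ≤ n)
    (A : Matrix (Fin n) (Fin n) R) :
    maxMinorsIdeal (smallKalman hdn A) =
      maxMinorsIdeal (reducedKalman (blockUL hdn A) (blockLL hdn A)) := by
  rw [smallKalman_eq_toBlocks₂₁]
  exact maxMinorsIdeal_kalman_toBlocks_eq _

/-- The ideal generated by the `d × d` minors of the small Kalman matrix of the generic matrix
equals the ideal `I_{d,n}` generated by the `d × d` minors of the reduced Kalman matrix: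
substituting `A12 = 0`, `A22 = 0` does not change the ideal of maximal minors. -/
theorem stmt17 {K : Type*} [Field K] (n d : ℕ) (hd2 : d ≤ n - 1) :
    Ideal.span (Set.range fun r : Fin d → Fin d × Fin (n - d) =>
        ((smallKalman (show d ≤ n by omega) (genMatrix K n)).submatrix r id).det)
      = Ideal.span (Set.range fun r : Fin d → Fin d × Fin (n - d) =>
          ((reducedKalman (blockUL (show d ≤ n by omega) (genMatrix K n))
              (blockLL (show d ≤ n by omega) (genMatrix K n))).submatrix r id).det) :=
  maxMinorsIdeal_smallKalman_eq _ (genMatrix K n)
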